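/- arXiv:2408.14648 — 2 statements merged into one kernel-verified Lean document; each statement's English description precedes it below -/
import Mathlib

section
/- Let F be an induced-2C2-free family of subsets of [n] with C♭ ⊆ F, and let A, B ∈ F \ C♭ with B ⊊ A. Then exactly one of the following occurs: (i) there exists j with 1 ≤ j ≤ n−1 such that B ⊊ C_j ⊊ A; or (ii) there exists a unique j with 1 ≤ j ≤ n−1 such that B ⊆ S_j ⊆ A and C_j is incomparable (under inclusion) to both A and B. -/
/-- `F ⊆ 𝒫([n])` contains an induced copy of the poset `2C₂`: four sets
`A ⊊ A'`, `B ⊊ B'`, with each of `A, A'` incomparable to each of `B, B'`. -/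
def Contains2C2 {n : ℕ} (F : Finset (Finset (Fin n))) : Prop :=
  ∃ A A' B B' : Finset (Fin n), A ∈ F ∧ A' ∈ F ∧ B ∈ F ∧ B' ∈ F ∧
    A ⊂ A' ∧ B ⊂ B' ∧
    ¬ A ⊆ B ∧ ¬ B ⊆ A ∧ ¬ A ⊆ B' ∧ ¬ B' ⊆ A ∧
    ¬ A' ⊆ B ∧ ¬ B ⊆ A' ∧ ¬ A' ⊆ B' ∧ ¬ B' ⊆ A'

/-- `F` is induced-`2C₂`-saturated: it is induced-`2C₂`-free, and adding any
missing set creates an induced copy of `2C₂`. -/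
def Saturated2C2 {n : ℕ} (F : Finset (Finset (Fin n))) : Prop :=
  ¬ Contains2C2 F ∧ ∀ S : Finset (Fin n), S ∉ F → Contains2C2 (insert S F)

/-- The chain element `C_i = [i] = {1,…,i}` (0-indexed: `{x : Fin n | x < i}`). -/
def chainC (n i : ℕ) : Finset (Fin n) := Finset.univ.filter (fun x => (x : ℕ) < i)

/-- The maximal chain `C♭ = {C_0, C_1, …, C_n}`. -/
def Cflat (n : ℕ) : Finset (Finset (Fin n)) := (Finset.range (n + 1)).image (chainC n)

/-- The shackle `S_i = [i-1] ∪ {i+1}` (1-indexed elements; 0-indexed: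
`{x : Fin n | x + 1 < i or x = i}`), meaningful for `1 ≤ i ≤ n-1`. -/
def shackle (n i : ℕ) : Finset (Fin n) :=
  Finset.univ.filter (fun x => (x : ℕ) + 1 < i ∨ (x : ℕ) = i)

/-- Two sets are comparable if one contains the other. -/
def Comp {n : ℕ} (A B : Finset (Fin n)) : Prop := A ⊆ B ∨ B ⊆ A

/-- Two sets are incomparable if neither contains the other. -/
def Incomp {n : ℕ} (A B : Finset (Fin n)) : Prop := ¬ A ⊆ B ∧ ¬ B ⊆ A

/-!
Write `a` for the least element missing from `A` and `b` for the largest element of `B`.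
Then `C_j ⊆ A ↔ j ≤ a` and `B ⊆ C_j ↔ b < j`, so alternative (i) says `b < a`, while
`C_j` is incomparable to both `A` and `B` exactly when `a < j ≤ b`. As `b ∈ A` and `a ∉ A`,
`a ≠ b`. If `a < b`, then `b = a + 1`: otherwise `C_{a+1} ⊊ C_{a+2}` and `B ⊊ A` form an
induced `2C₂`. Hence `j = a + 1` is the only candidate in (ii), and `S_{a+1}` lies between
`B` and `A`.
-/

open Finset

section Chain

variable {n : ℕ} {A B : Finset (Fin n)} {j : ℕ}

@[simp]
lemma mem_chainC {x : Fin n} : x ∈ chainC n j ↔ (x : ℕ) < j := by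
  simp [chainC]

@[simp]
lemma mem_shackle {x : Fin n} : x ∈ shackle n j ↔ (x : ℕ) + 1 < j ∨ (x : ℕ) = j := by
  simp [shackle]

lemma chainC_mem_Cflat (hj : j ≤ n) : chainC n j ∈ Cflat n :=
  mem_image.mpr ⟨j, mem_range.mpr (Nat.lt_succ_of_le hj), rfl⟩

lemma chainC_ne_of_notMem_Cflat (hA : A ∉ Cflat n) (hj : j ≤ n) : chainC n j ≠ A :=
  fun h => hA (h ▸ chainC_mem_Cflat hj)

lemma nonempty_of_notMem_Cflat (hB : B ∉ Cflat n) : B.Nonempty := by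
  rw [nonempty_iff_ne_empty]
  refine fun h => chainC_ne_of_notMem_Cflat hB (Nat.zero_le n) ?_
  ext x
  simp [h]

lemma compl_nonempty_of_notMem_Cflat (hA : A ∉ Cflat n) : Aᶜ.Nonempty := by
  rw [nonempty_iff_ne_empty, Ne, compl_eq_empty_iff]
  refine fun h => chainC_ne_of_notMem_Cflat hA le_rfl ?_
  ext x
  simp [h, x.isLt]

lemma chainC_ssubset_chainC {i : ℕ} (hij : i < j) (hi : i < n) :
    chainC n i ⊂ chainC n j := by
  have hsub : chainC n i ⊆ chainC n j := fun x hx => by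
    rw [mem_chainC] at hx ⊢
    omega
  exact (ssubset_iff_of_subset hsub).mpr ⟨⟨i, hi⟩, by simpa using hij, by simp⟩

lemma chainC_subset_iff_le_min'_compl (hA : Aᶜ.Nonempty) :
    chainC n j ⊆ A ↔ j ≤ Aᶜ.min' hA := by
  constructor
  · intro h
    by_contra! hlt
    exact mem_compl.mp (min'_mem _ hA) (h (mem_chainC.mpr hlt))
  · intro h x hx
    by_contra hxA
    have := Fin.le_iff_val_le_val.mp (min'_le _ x (mem_compl.mpr hxA))
    rw [mem_chainC] at hx
    omega

lemma subset_chainC_iff_max'_lt (hB : B.Nonempty) :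
    B ⊆ chainC n j ↔ (B.max' hB : ℕ) < j :=
  ⟨fun h => mem_chainC.mp (h (max'_mem B hB)),
    fun h x hx => mem_chainC.mpr ((Fin.le_iff_val_le_val.mp (le_max' B x hx)).trans_lt h)⟩

lemma incomp_chainC_iff (hBA : B ⊆ A) (hA : Aᶜ.Nonempty) (hB : B.Nonempty) :
    Incomp (chainC n j) A ∧ Incomp (chainC n j) B ↔
      (Aᶜ.min' hA : ℕ) < j ∧ j ≤ B.max' hB := by
  rw [← not_le, ← chainC_subset_iff_le_min'_compl hA, ← not_lt,
    ← subset_chainC_iff_max'_lt hB]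
  constructor
  · rintro ⟨⟨hjA, -⟩, -, hBj⟩
    exact ⟨hjA, hBj⟩
  · rintro ⟨hjA, hBj⟩
    exact ⟨⟨hjA, fun h => hBj (hBA.trans h)⟩, fun h => hjA (h.trans hBA), hBj⟩

end Chain

/-- The remaining six incomparabilities follow from these two along `A ⊆ A'` and `B ⊆ B'`. -/
lemma contains2C2_of_not_subset {n : ℕ} {F : Finset (Finset (Fin n))}
    {A A' B B' : Finset (Fin n)} (hA : A ∈ F) (hA' : A' ∈ F) (hB : B ∈ F) (hB' : B' ∈ F)
    (hAA' : A ⊂ A') (hBB' : B ⊂ B')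
    (hAB' : ¬ A ⊆ B') (hBA' : ¬ B ⊆ A') : Contains2C2 F :=
  ⟨A, A', B, B', hA, hA', hB, hB', hAA', hBB',
    fun h => hAB' (h.trans hBB'.subset), fun h => hBA' (h.trans hAA'.subset),
    hAB', fun h => hBA' (hBB'.subset.trans (h.trans hAA'.subset)),
    fun h => hAB' (hAA'.subset.trans (h.trans hBB'.subset)), hBA',
    fun h => hAB' (hAA'.subset.trans h), fun h => hBA' (hBB'.subset.trans h)⟩

section Free

variable {n : ℕ} {F : Finset (Finset (Fin n))} {A B : Finset (Fin n)}

lemma max'_le_min'_compl_add_one (hfree : ¬ Contains2C2 F) (hC : Cflat n ⊆ F)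
    (hA : A ∈ F) (hB : B ∈ F) (hBA : B ⊂ A) (hAc : Aᶜ.Nonempty) (hBne : B.Nonempty) :
    (B.max' hBne : ℕ) ≤ Aᶜ.min' hAc + 1 := by
  by_contra! hgap
  have hn : (Aᶜ.min' hAc : ℕ) + 2 ≤ n := hgap.trans (B.max' hBne).isLt
  refine hfree (contains2C2_of_not_subset (hC (chainC_mem_Cflat (by omega)))
    (hC (chainC_mem_Cflat hn)) hB hA (chainC_ssubset_chainC (lt_add_one _) (by omega)) hBA
    ?_ ?_)
  · rw [chainC_subset_iff_le_min'_compl hAc]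
    omega
  · rw [subset_chainC_iff_max'_lt hBne]
    omega

lemma subset_shackle_and_shackle_subset (hBA : B ⊆ A) (hAc : Aᶜ.Nonempty) (hBne : B.Nonempty)
    (hab : (B.max' hBne : ℕ) = Aᶜ.min' hAc + 1) :
    B ⊆ shackle n (Aᶜ.min' hAc + 1) ∧ shackle n (Aᶜ.min' hAc + 1) ⊆ A := by
  have haA : Aᶜ.min' hAc ∉ A := mem_compl.mp (min'_mem _ hAc)
  constructor
  · intro x hx
    have hxb := Fin.le_iff_val_le_val.mp (le_max' B x hx)
    have hxa : (x : ℕ) ≠ Aᶜ.min' hAc := fun h => haA (hBA (Fin.ext h ▸ hx))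
    rw [mem_shackle]
    omega
  · intro x hx
    rcases mem_shackle.mp hx with hxa | hxb
    · exact (chainC_subset_iff_le_min'_compl hAc).mpr le_rfl (mem_chainC.mpr (by omega))
    · exact Fin.ext (hxb.trans hab.symm) ▸ hBA (max'_mem B hBne)

lemma exists_chainC_between_iff (hA' : A ∉ Cflat n) (hB' : B ∉ Cflat n)
    (hAc : Aᶜ.Nonempty) (hBne : B.Nonempty) :
    (∃ j, 1 ≤ j ∧ j + 1 ≤ n ∧ B ⊂ chainC n j ∧ chainC n j ⊂ A) ↔
      (B.max' hBne : ℕ) < Aᶜ.min' hAc := by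
  constructor
  · rintro ⟨j, -, -, hBj, hjA⟩
    have := (subset_chainC_iff_max'_lt hBne).mp hBj.subset
    have := (chainC_subset_iff_le_min'_compl hAc).mp hjA.subset
    omega
  · intro h
    have ha := (Aᶜ.min' hAc).isLt
    refine ⟨B.max' hBne + 1, by omega, by omega, ?_, ?_⟩
    · exact ((subset_chainC_iff_max'_lt hBne).mpr (lt_add_one _)).ssubset_of_ne
        (chainC_ne_of_notMem_Cflat hB' (by omega)).symm
    · exact ((chainC_subset_iff_le_min'_compl hAc).mpr h).ssubset_of_ne
        (chainC_ne_of_notMem_Cflat hA' (by omega))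

lemma existsUnique_shackle_iff (hfree : ¬ Contains2C2 F) (hC : Cflat n ⊆ F)
    (hA : A ∈ F) (hB : B ∈ F) (hBA : B ⊂ A) (hAc : Aᶜ.Nonempty) (hBne : B.Nonempty) :
    (∃! j, 1 ≤ j ∧ j + 1 ≤ n ∧ B ⊆ shackle n j ∧ shackle n j ⊆ A ∧
        Incomp (chainC n j) A ∧ Incomp (chainC n j) B) ↔
      (Aᶜ.min' hAc : ℕ) < B.max' hBne := by
  have hincomp := fun j => incomp_chainC_iff (j := j) hBA.subset hAc hBne
  constructor
  · rintro ⟨j, ⟨-, -, -, -, hjA, hjB⟩, -⟩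
    have := (hincomp j).mp ⟨hjA, hjB⟩
    omega
  · intro hab
    have hb := max'_le_min'_compl_add_one hfree hC hA hB hBA hAc hBne
    have hb' := (B.max' hBne).isLt
    obtain ⟨hBS, hSA⟩ := subset_shackle_and_shackle_subset hBA.subset hAc hBne (by omega)
    refine ⟨Aᶜ.min' hAc + 1,
      ⟨by omega, by omega, hBS, hSA, (hincomp _).mpr ⟨by omega, by omega⟩⟩, ?_⟩
    rintro j ⟨-, -, -, -, hjA, hjB⟩
    have := (hincomp j).mp ⟨hjA, hjB⟩
    omega

end Free

/-- If `F` is induced-`2C₂`-free, contains the maximal chain `C♭`, and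
`A, B ∈ F \ C♭` with `B ⊊ A`, then exactly one of the following holds:
(i) some `C_j` (with `1 ≤ j ≤ n-1`) satisfies `B ⊊ C_j ⊊ A`; or
(ii) there is a unique `j` with `1 ≤ j ≤ n-1` such that `B ⊆ S_j ⊆ A` and
`C_j` is incomparable to both `A` and `B`. -/
theorem two_related_elements_structure (n : ℕ)
    (F : Finset (Finset (Fin n))) (hfree : ¬ Contains2C2 F) (hC : Cflat n ⊆ F)
    (A B : Finset (Fin n)) (hA : A ∈ F) (hA' : A ∉ Cflat n)
    (hB : B ∈ F) (hB' : B ∉ Cflat n) (hBA : B ⊂ A) :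
    Xor'
      (∃ j, 1 ≤ j ∧ j + 1 ≤ n ∧ B ⊂ chainC n j ∧ chainC n j ⊂ A)
      (∃! j, 1 ≤ j ∧ j + 1 ≤ n ∧ B ⊆ shackle n j ∧ shackle n j ⊆ A ∧
        Incomp (chainC n j) A ∧ Incomp (chainC n j) B) := by
  have hAc := compl_nonempty_of_notMem_Cflat hA'
  have hBne := nonempty_of_notMem_Cflat hB'
  rw [exists_chainC_between_iff hA' hB' hAc hBne,
    existsUnique_shackle_iff hfree hC hA hB hBA hAc hBne]
  have hab : (Aᶜ.min' hAc : ℕ) ≠ B.max' hBne := fun h =>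
    mem_compl.mp (min'_mem _ hAc) (Fin.ext h ▸ hBA.subset (max'_mem B hBne))
  rcases lt_or_gt_of_ne hab with h | h
  · exact Or.inr ⟨h, h.not_gt⟩
  · exact Or.inl ⟨h, h.not_gt⟩
end

section
/- For integers n ≥ 3 and 2 ≤ i ≤ n−1, the family F*_i consisting of the maximal chain C♭, the singletons {2}, {3}, …, {i}, and the anti-singletons [n]∖{i}, [n]∖{i+1}, …, [n]∖{n−1}, is induced-2C2-free. -/
/-- The family `F*_i`: the maximal chain `C♭`, the singletons `{2},…,{i}`, and
the anti-singletons `[n]∖{i}, [n]∖{i+1}, …, [n]∖{n-1}` (1-indexed). -/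
def Fstar (n i : ℕ) : Finset (Finset (Fin n)) :=
  Cflat n ∪
    (Finset.univ.filter (fun x : Fin n => 1 ≤ (x : ℕ) ∧ (x : ℕ) + 1 ≤ i)).image
      (fun x => ({x} : Finset (Fin n))) ∪
    (Finset.univ.filter (fun x : Fin n => i ≤ (x : ℕ) + 1 ∧ (x : ℕ) + 2 ≤ n)).image
      (fun x => (Finset.univ \ {x} : Finset (Fin n)))

/-!
Every chain set `C_k` is comparable with one of any two nested sets `B ⊊ B'` of `F*_i`:
off the chain, the only strict inclusions are `{x} ⊊ [n] ∖ {y}` with `x ≤ i ≤ y`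
(by size), and `C_k` contains `{x}` when `x ≤ k` and lies in `[n] ∖ {y}` when `k < x`.
So an induced `2C₂` avoids the chain and reads `{x} ⊊ [n] ∖ {y}`, `{x'} ⊊ [n] ∖ {y'}`.
Incomparability of `{x}` with `[n] ∖ {y'}` forces `x = y'`, and likewise `x' = y`;
hence `x = y' ≥ i ≥ x' = y ≥ i ≥ x`, and the two singletons coincide.
-/

open Finset

lemma chainC_mono (n : ℕ) : Monotone (chainC n) := by
  intro j k hjk x hx
  simp only [chainC, mem_filter, mem_univ, true_and] at hx ⊢
  omega

lemma comp_chainC (n j k : ℕ) : Comp (chainC n j) (chainC n k) :=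
  (le_total j k).imp (fun h => chainC_mono n h) (fun h => chainC_mono n h)

lemma mem_Fstar_cases {n i : ℕ} {S : Finset (Fin n)} (hS : S ∈ Fstar n i) :
    (∃ k, S = chainC n k) ∨
    (∃ x : Fin n, (x : ℕ) + 1 ≤ i ∧ S = {x}) ∨
    (∃ y : Fin n, i ≤ (y : ℕ) + 1 ∧ (y : ℕ) + 2 ≤ n ∧ S = univ \ {y}) := by
  simp only [Fstar, Cflat, mem_union, mem_image, mem_filter, mem_range, mem_univ,
    true_and] at hS
  rcases hS with (⟨k, -, rfl⟩ | ⟨x, hx, rfl⟩) | ⟨y, hy, rfl⟩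
  exacts [Or.inl ⟨k, rfl⟩, Or.inr (Or.inl ⟨x, hx.2, rfl⟩),
    Or.inr (Or.inr ⟨y, hy.1, hy.2, rfl⟩)]

lemma Fstar_ssubset_cases {n i : ℕ} {S T : Finset (Fin n)} (hS : S ∈ Fstar n i)
    (hT : T ∈ Fstar n i) (hST : S ⊂ T) :
    (∃ k, S = chainC n k) ∨ (∃ k, T = chainC n k) ∨
    ∃ x y : Fin n, (x : ℕ) + 1 ≤ i ∧ i ≤ (y : ℕ) + 1 ∧
      S = {x} ∧ T = univ \ {y} := by
  have hcard := card_lt_card hST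
  rcases mem_Fstar_cases hS with hS | ⟨x, hx, rfl⟩ | ⟨y, hy, hyn, rfl⟩
  · exact Or.inl hS
  all_goals rcases mem_Fstar_cases hT with hT | ⟨z, -, rfl⟩ | ⟨y', hy', -, rfl⟩
  all_goals first
    | exact Or.inr (Or.inl hT)
    | exact Or.inr (Or.inr ⟨x, y', hx, hy', rfl, rfl⟩)
    | simp only [card_singleton, card_univ_sdiff, Fintype.card_fin] at hcard; omega

lemma comp_chainC_of_ssubset {n i : ℕ} {B B' : Finset (Fin n)} (hB : B ∈ Fstar n i)
    (hB' : B' ∈ Fstar n i) (hBB' : B ⊂ B') (k : ℕ) :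
    Comp (chainC n k) B ∨ Comp (chainC n k) B' := by
  rcases Fstar_ssubset_cases hB hB' hBB' with
    ⟨m, rfl⟩ | ⟨m, rfl⟩ | ⟨x, y, hx, hy, rfl, rfl⟩
  · exact Or.inl (comp_chainC n k m)
  · exact Or.inr (comp_chainC n k m)
  by_cases hxk : (x : ℕ) < k
  · exact Or.inl (Or.inr (by simp [chainC, hxk]))
  · refine Or.inr (Or.inl fun z hz => ?_)
    simp only [chainC, mem_filter, mem_univ, true_and] at hz
    simp only [mem_sdiff, mem_univ, mem_singleton, true_and]
    rintro rfl
    omega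

lemma eq_singleton_sdiff_of_incomp {n i : ℕ} {A A' B B' : Finset (Fin n)}
    (hA : A ∈ Fstar n i) (hA' : A' ∈ Fstar n i) (hAA' : A ⊂ A')
    (hB : B ∈ Fstar n i) (hB' : B' ∈ Fstar n i) (hBB' : B ⊂ B')
    (hAB : Incomp A B) (hAB' : Incomp A B') (hA'B : Incomp A' B) (hA'B' : Incomp A' B') :
    ∃ x y : Fin n, (x : ℕ) + 1 ≤ i ∧ i ≤ (y : ℕ) + 1 ∧
      A = {x} ∧ A' = univ \ {y} := by
  rcases Fstar_ssubset_cases hA hA' hAA' with ⟨k, rfl⟩ | ⟨k, rfl⟩ | h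
  · exact absurd (comp_chainC_of_ssubset hB hB' hBB' k)
      (not_or.2 ⟨not_or.2 hAB, not_or.2 hAB'⟩)
  · exact absurd (comp_chainC_of_ssubset hB hB' hBB' k)
      (not_or.2 ⟨not_or.2 hA'B, not_or.2 hA'B'⟩)
  · exact h

theorem Fstar_free_general (n i : ℕ) :
    ¬ Contains2C2 (Fstar n i) := by
  rintro ⟨A, A', B, B', hA, hA', hB, hB', hAA', hBB',
    hAB, hBA, hAB', hB'A, hA'B, hBA', hA'B', hB'A'⟩
  obtain ⟨x, y, hx, hy, rfl, rfl⟩ := eq_singleton_sdiff_of_incomp hA hA' hAA' hB hB' hBB'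
    ⟨hAB, hBA⟩ ⟨hAB', hB'A⟩ ⟨hA'B, hBA'⟩ ⟨hA'B', hB'A'⟩
  obtain ⟨x', y', hx', hy', rfl, rfl⟩ := eq_singleton_sdiff_of_incomp hB hB' hBB' hA hA' hAA'
    ⟨hBA, hAB⟩ ⟨hBA', hA'B⟩ ⟨hB'A, hAB'⟩ ⟨hB'A', hA'B'⟩
  have hxy' : x = y' := by simpa using hAB'
  have hx'y : x' = y := by simpa using hBA'
  subst hxy' hx'y
  exact hAB (by rw [Fin.ext (by omega : (x : ℕ) = x')])

/-- For `n ≥ 3` and `2 ≤ i ≤ n-1`, the family `F*_i` is induced-`2C₂`-free. -/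
theorem Fstar_free (n i : ℕ) (hn : 3 ≤ n) (hi2 : 2 ≤ i) (hin : i + 1 ≤ n) :
    ¬ Contains2C2 (Fstar n i) :=
  Fstar_free_general n i
end
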